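/- Let ζ be a probability measure on ℝ absolutely continuous with respect to Lebesgue measure, and let (Sₙ) be a sequence of Borel-measurable functions Sₙ : ℝ → ℝ uniformly bounded by 1. Define fₙ(x) := x · ∫ Sₙ(x + z) dζ(z). Then the family (fₙ) is equicontinuous at every point x: for every x and ε > 0 there is δ > 0 such that |fₙ(x + h) − fₙ(x)| < ε for all n and all |h| < δ, provided x ranges in a bounded set. -/

import Mathlib

/-!
Write `ζ = ρ λ`. Then `∫ Sₙ(c + z) dζ(z) = ∫ ρ(u - c) Sₙ(u) du`, so, since `|Sₙ| ≤ 1`, the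
increment of this average between `x` and `c` is bounded, uniformly in `n`, by
`∫ |ρ(u - c) - ρ(u - x)| du`, which tends to `0` as `c → x` by continuity of translation in `L¹`.
The averages are bounded by `1`, so multiplying them by the continuous factor `c` keeps the
family equicontinuous.
-/

open MeasureTheory Filter Topology

section Translation

variable {G : Type*} [AddGroup G] [TopologicalSpace G] [ContinuousAdd G] [R1Space G]
  [MeasurableSpace G] [BorelSpace G] {μ : Measure G} [IsLocallyFiniteMeasure μ]
  [μ.InnerRegularCompactLTTop] [μ.IsAddLeftInvariant]

theorem tendsto_integral_norm_comp_add_sub {g : G → ℝ} (hg : Integrable g μ) (x : G) :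
    Tendsto (fun c => ∫ u, ‖g (c + u) - g (x + u)‖ ∂μ) (𝓝 x) (𝓝 0) := by
  have hg₁ : MemLp g 1 μ := memLp_one_iff_integrable.mpr hg
  set τ : G → Lp ℝ 1 μ := fun c => DomAddAct.mk c +ᵥ hg₁.toLp g
  have : Fact ((1 : ENNReal) ≠ ⊤) := ⟨ENNReal.one_ne_top⟩
  have hτ : Continuous τ := DomAddAct.continuous_mk.vadd continuous_const
  have hτ_ae : ∀ c, τ c =ᵐ[μ] fun u => g (c + u) := fun c => by
    simp only [τ, DomAddAct.mk_vadd_toLp]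
    exact MemLp.coeFn_toLp _
  have hnorm : ∀ c, ∫ u, ‖g (c + u) - g (x + u)‖ ∂μ = ‖τ c - τ x‖ := fun c => by
    rw [L1.norm_eq_integral_norm]
    refine integral_congr_ae ?_
    filter_upwards [Lp.coeFn_sub (τ c) (τ x), hτ_ae c, hτ_ae x] with u h hc hx
    rw [h, Pi.sub_apply, hc, hx]
  simp only [hnorm]
  exact tendsto_iff_norm_sub_tendsto_zero.mp (hτ.tendsto x)

end Translation

theorem abs_integral_mul_le_integral_abs_of_abs_le_one {α : Type*} [MeasurableSpace α] {μ : Measure α}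
    {g f : α → ℝ} (hg : Integrable g μ) (hf : ∀ u, |f u| ≤ 1) :
    |∫ u, g u * f u ∂μ| ≤ ∫ u, |g u| ∂μ := by
  refine (abs_integral_le_integral_abs).trans <|
    integral_mono_of_nonneg (Eventually.of_forall fun _ => abs_nonneg _) hg.abs
      (Eventually.of_forall fun u => ?_)
  simpa [abs_mul] using mul_le_mul_of_nonneg_left (hf u) (abs_nonneg (g u))

section Density

variable {G : Type*} [AddGroup G] [MeasurableSpace G] [MeasurableAdd G]
  {μ ν : Measure G} [μ.IsAddLeftInvariant]

theorem integral_comp_add_eq_integral_rnDeriv_mul [ν.HaveLebesgueDecomposition μ] [SigmaFinite ν]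
    (hνμ : ν ≪ μ) (f : G → ℝ) (c : G) :
    ∫ z, f (c + z) ∂ν = ∫ u, (ν.rnDeriv μ (-c + u)).toReal * f u ∂μ := by
  rw [← integral_toReal_rnDeriv_mul hνμ,
    ← integral_add_left_eq_self (fun u => (ν.rnDeriv μ (-c + u)).toReal * f u) c]
  simp only [neg_add_cancel_left]

theorem abs_integral_comp_add_sub_le [ν.HaveLebesgueDecomposition μ] [IsFiniteMeasure ν]
    (hνμ : ν ≪ μ) {f : G → ℝ} (hf : Measurable f) (hf1 : ∀ y, |f y| ≤ 1) (c x : G) :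
    |∫ z, f (c + z) ∂ν - ∫ z, f (x + z) ∂ν| ≤
      ∫ u, ‖(ν.rnDeriv μ (-c + u)).toReal - (ν.rnDeriv μ (-x + u)).toReal‖ ∂μ := by
  have hρ : Integrable (fun u => (ν.rnDeriv μ u).toReal) μ := Measure.integrable_toReal_rnDeriv
  have hprod : ∀ a : G, Integrable (fun u => (ν.rnDeriv μ (-a + u)).toReal * f u) μ := fun a =>
    (hρ.comp_add_left (-a)).mul_bdd hf.aestronglyMeasurable (Eventually.of_forall hf1)
  rw [integral_comp_add_eq_integral_rnDeriv_mul hνμ, integral_comp_add_eq_integral_rnDeriv_mul hνμ,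
    ← integral_sub (hprod c) (hprod x)]
  simp only [← sub_mul]
  exact abs_integral_mul_le_integral_abs_of_abs_le_one ((hρ.comp_add_left _).sub (hρ.comp_add_left _)) hf1

end Density

theorem abs_mul_sub_mul_le (c x a b : ℝ) : |c * a - x * b| ≤ |c - x| * |a| + |x| * |a - b| := by
  calc |c * a - x * b| = |(c - x) * a + x * (a - b)| := by ring_nf
    _ ≤ |c - x| * |a| + |x| * |a - b| := by
      simpa only [abs_mul] using abs_add_le ((c - x) * a) (x * (a - b))

theorem equicontinuousAt_mul_integral_comp_add {ι : Type*} {ν : Measure ℝ} [IsFiniteMeasure ν]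
    (hν : ν ≪ volume) {S : ι → ℝ → ℝ} (hS : ∀ i, Measurable (S i)) (hS1 : ∀ i y, |S i y| ≤ 1)
    (x : ℝ) : EquicontinuousAt (fun i c => c * ∫ z, S i (c + z) ∂ν) x := by
  set ρ : ℝ → ℝ := fun u => (ν.rnDeriv volume u).toReal
  have hbound : ∀ i c, |∫ z, S i (c + z) ∂ν| ≤ ν.real Set.univ := fun i c => by
    simpa using norm_integral_le_of_norm_le_const (μ := ν) (Eventually.of_forall fun z =>
      (Real.norm_eq_abs _).trans_le (hS1 i (c + z)))
  refine Metric.equicontinuousAt_of_continuity_modulus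
    (fun c => |c - x| * ν.real Set.univ + |x| * ∫ u, ‖ρ (-c + u) - ρ (-x + u)‖) ?_ _
    (Eventually.of_forall fun c i => ?_)
  · have hρ : Tendsto (fun c => ∫ u, ‖ρ (-c + u) - ρ (-x + u)‖) (𝓝 x) (𝓝 0) :=
      (tendsto_integral_norm_comp_add_sub Measure.integrable_toReal_rnDeriv (-x)).comp
        (continuous_neg.tendsto x)
    have hlin : Tendsto (fun c => |c - x|) (𝓝 x) (𝓝 0) := by
      simpa using (continuous_sub_right x).abs.tendsto x
    simpa using (hlin.mul_const _).add (hρ.const_mul |x|)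
  · rw [dist_comm, Real.dist_eq]
    refine (abs_mul_sub_mul_le _ _ _ _).trans (add_le_add ?_ ?_)
    · exact mul_le_mul_of_nonneg_left (hbound i c) (abs_nonneg _)
    · exact mul_le_mul_of_nonneg_left
        (abs_integral_comp_add_sub_le hν (hS i) (hS1 i) c x) (abs_nonneg _)

theorem equicontinuity_of_averaged_prices
    (ζ : Measure ℝ) [IsProbabilityMeasure ζ]
    (hac : ζ ≪ (volume : Measure ℝ))
    (S : ℕ → ℝ → ℝ)
    (hmeas : ∀ n, Measurable (S n))
    (hbdd : ∀ n y, |S n y| ≤ 1)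
    (a b : ℝ) :
    ∀ x ∈ Set.Icc a b, ∀ ε > 0, ∃ δ > 0, ∀ (n : ℕ) (h : ℝ), |h| < δ →
      |(x + h) * (∫ z, S n (x + h + z) ∂ζ) - x * (∫ z, S n (x + z) ∂ζ)| < ε := by
  intro x _ ε hε
  obtain ⟨δ, hδ, hclose⟩ := Metric.equicontinuousAt_iff.mp
    (equicontinuousAt_mul_integral_comp_add hac hmeas hbdd x) ε hε
  refine ⟨δ, hδ, fun n h hh => ?_⟩
  have := hclose (x + h) (by simpa [Real.dist_eq] using hh) n
  rwa [dist_comm, Real.dist_eq] at this
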